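/- Let H_1 and H_2 be two connected graphs each with at least two vertices, and let P = v_1 v_2 … v_d be a path on d ≥ 2 vertices. Let u ∈ V(H_1) and v ∈ V(H_2). Let G be the graph obtained from H_1, H_2 and P by identifying the three vertices u, v and v_1 into a single vertex, and let G' be the graph obtained from H_1, H_2 and P by identifying u with v_1 and identifying v with v_d. Then ε(G') > ε(G). -/

import Mathlib

open SimpleGraph

/-- The eccentricity of a vertex: maximum distance to any vertex. -/
noncomputable def ecc {V : Type*} (G : SimpleGraph V) (v : V) : ℕ :=
  ⨆ u, G.dist v u

/-- The total eccentricity index: sum of eccentricities of all vertices. -/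
noncomputable def totalEcc {V : Type*} [Fintype V] (G : SimpleGraph V) : ℕ :=
  ∑ v, ecc G v

/-- A pendant vertex: a vertex of degree one, i.e. with exactly one neighbour. -/
def IsPendant {V : Type*} (G : SimpleGraph V) (v : V) : Prop :=
  ∃! u, G.Adj v u

/-- A cut vertex: a vertex whose removal disconnects the graph. -/
def IsCutVertex {V : Type*} (G : SimpleGraph V) (w : V) : Prop :=
  ¬ (G.induce {v | v ≠ w}).Connected

/-- distance between two subgraphs -/
noncomputable def subgraphDist {V : Type*} (G : SimpleGraph V) (B B' : G.Subgraph) : ℕ :=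
  sInf {d | ∃ u ∈ B.verts, ∃ w ∈ B'.verts, G.dist u w = d}

/-- A 2-connected subgraph: at least two vertices, connected, and no cut vertex. -/
def TwoConn {V : Type*} {G : SimpleGraph V} (H : G.Subgraph) : Prop :=
  2 ≤ H.verts.ncard ∧ H.coe.Connected ∧ ∀ w, ¬ IsCutVertex H.coe w

/-- A block: a maximal 2-connected subgraph. -/
def IsBlock {V : Type*} {G : SimpleGraph V} (H : G.Subgraph) : Prop :=
  TwoConn H ∧ ∀ H' : G.Subgraph, H ≤ H' → TwoConn H' → H' = H

/-- A pendant block: a block containing exactly one cut vertex of `G`. -/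
def IsPendantBlock {V : Type*} (G : SimpleGraph V) (H : G.Subgraph) : Prop :=
  ∃! w, w ∈ H.verts ∧ IsCutVertex G w

/-- `G_{k,l}`: the graph obtained from `G` by attaching two new paths,
with `k` resp. `l` new vertices, at the vertex `v`. -/
def attachTwoPaths {V : Type*} (G : SimpleGraph V) (v : V) (k l : ℕ) :
    SimpleGraph (V ⊕ (Fin k ⊕ Fin l)) :=
  SimpleGraph.fromRel (fun p q =>
    match p, q with
    | .inl x, .inl y => G.Adj x y
    | .inl x, .inr (.inl i) => x = v ∧ i.val = 0
    | .inl x, .inr (.inr i) => x = v ∧ i.val = 0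
    | .inr (.inl i), .inr (.inl j) => i.val + 1 = j.val
    | .inr (.inr i), .inr (.inr j) => i.val + 1 = j.val
    | _, _ => False)

/-- The graph obtained from `H1`, `H2` and the path `P_d = v_1 v_2 … v_d` by identifying
`u ∈ V(H1)`, `v ∈ V(H2)` and `v_1` into a single vertex.  The `Fin (d-1)` part records the
path vertices `v_2, …, v_d`. -/
def glueMid {V1 V2 : Type*} (H1 : SimpleGraph V1) (H2 : SimpleGraph V2)
    (u : V1) (v : V2) (d : ℕ) :
    SimpleGraph (V1 ⊕ ({x : V2 // x ≠ v} ⊕ Fin (d - 1))) :=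
  SimpleGraph.fromRel (fun p q =>
    match p, q with
    | .inl x, .inl y => H1.Adj x y
    | .inl x, .inr (.inl y) => x = u ∧ H2.Adj v y.1
    | .inl x, .inr (.inr i) => x = u ∧ i.val = 0
    | .inr (.inl x), .inr (.inl y) => H2.Adj x.1 y.1
    | .inr (.inr i), .inr (.inr j) => i.val + 1 = j.val
    | _, _ => False)

/-- The graph obtained from `H1`, `H2` and the path `P_d = v_1 v_2 … v_d` by identifying
`u ∈ V(H1)` with `v_1` and `v ∈ V(H2)` with `v_d`.  The `Fin (d-1)` part records the path
vertices `v_2, …, v_d` (the last one being identified with `v`). -/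
def glueEnds {V1 V2 : Type*} (H1 : SimpleGraph V1) (H2 : SimpleGraph V2)
    (u : V1) (v : V2) (d : ℕ) :
    SimpleGraph (V1 ⊕ ({x : V2 // x ≠ v} ⊕ Fin (d - 1))) :=
  SimpleGraph.fromRel (fun p q =>
    match p, q with
    | .inl x, .inl y => H1.Adj x y
    | .inl x, .inr (.inr i) => x = u ∧ i.val = 0
    | .inr (.inl x), .inr (.inl y) => H2.Adj x.1 y.1
    | .inr (.inr i), .inr (.inl y) => i.val + 1 = d - 1 ∧ H2.Adj v y.1
    | .inr (.inr i), .inr (.inr j) => i.val + 1 = j.val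
    | _, _ => False)

/-- `U_{n,g}^l`: the unicyclic graph on `n` vertices obtained by joining one end vertex of
the path `P_{n-g}` to a vertex of the cycle `C_g` by an edge. -/
def UnlGraph (n g : ℕ) : SimpleGraph (Fin (n - g) ⊕ Fin g) :=
  SimpleGraph.fromRel (fun p q =>
    match p, q with
    | .inl i, .inl j => i.val + 1 = j.val
    | .inl i, .inr j => i.val + 1 = n - g ∧ j.val = 0
    | .inr i, .inr j => i.val + 1 = j.val ∨ (i.val = 0 ∧ j.val + 1 = g)
    | _, _ => False)

/-- `U_{n,g}^p`: the unicyclic graph on `n` vertices obtained by attaching `n - g` pendant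
vertices to one vertex of the cycle `C_g`. -/
def UnpGraph (n g : ℕ) : SimpleGraph (Fin g ⊕ Fin (n - g)) :=
  SimpleGraph.fromRel (fun p q =>
    match p, q with
    | .inl i, .inl j => i.val + 1 = j.val ∨ (i.val = 0 ∧ j.val + 1 = g)
    | .inl i, .inr _ => i.val = 0
    | _, _ => False)

/-- The graph obtained by joining the vertex `u` of `H` to the pendant vertex of
`U_{r,g}^l` by an edge. -/
def joinPendant {V : Type*} (H : SimpleGraph V) (u : V) (r g : ℕ) :
    SimpleGraph (V ⊕ (Fin (r - g) ⊕ Fin g)) :=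
  SimpleGraph.fromRel (fun p q =>
    match p, q with
    | .inl x, .inl y => H.Adj x y
    | .inl x, .inr (.inl i) => x = u ∧ i.val = 0
    | .inr a, .inr b => (UnlGraph r g).Adj a b
    | _, _ => False)

/-- `C_{m1,m2}^n` in the case `n = m1 + m2 - 1`: two cycles `C_{m1}` and `C_{m2}`
sharing exactly one vertex (the vertex `0`). -/
def twoCyclesGlued (m1 m2 : ℕ) : SimpleGraph (Fin (m1 + m2 - 1)) :=
  SimpleGraph.fromRel (fun i j =>
    (i.val + 1 = j.val ∧ j.val < m1) ∨ (i.val = 0 ∧ j.val + 1 = m1)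
    ∨ (i.val = 0 ∧ j.val = m1) ∨ (m1 ≤ i.val ∧ i.val + 1 = j.val)
    ∨ (i.val = 0 ∧ j.val + 2 = m1 + m2))

/-- `C_{3,3}^n` for `n > 5`: two triangles `{0,1,2}` and `{n-3,n-2,n-1}` joined by the path
`2, 3, …, n-3` (a path on `n - 4` vertices whose ends are identified with a vertex of each
triangle). -/
def C33 (n : ℕ) : SimpleGraph (Fin n) :=
  SimpleGraph.fromRel (fun i j =>
    (i.val = 0 ∧ j.val = 1) ∨ (i.val = 0 ∧ j.val = 2) ∨ (i.val = 1 ∧ j.val = 2)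
    ∨ (2 ≤ i.val ∧ i.val + 1 = j.val ∧ j.val + 3 ≤ n)
    ∨ (i.val + 3 = n ∧ j.val + 2 = n) ∨ (i.val + 2 = n ∧ j.val + 1 = n)
    ∨ (i.val + 3 = n ∧ j.val + 1 = n))

/-- `T(l, m, d)`: the tree obtained from the path `P_d` by attaching `l` pendant vertices at
one end and `m` pendant vertices at the other end. -/
def Tlmd (l m d : ℕ) : SimpleGraph (Fin d ⊕ (Fin l ⊕ Fin m)) :=
  SimpleGraph.fromRel (fun p q =>
    match p, q with
    | .inl i, .inl j => i.val + 1 = j.val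
    | .inl i, .inr (.inl _) => i.val = 0
    | .inl i, .inr (.inr _) => i.val + 1 = d
    | _, _ => False)

/-- `K_m^n(l_1, …, l_m)`: the graph obtained from the complete graph `K_m` by identifying,
for each `i`, one end vertex of a path on `l i` vertices with the `i`-th vertex of `K_m`.
The vertex `⟨i, 0⟩` is the `i`-th vertex of the complete graph. -/
def Kmn (m : ℕ) (l : Fin m → ℕ) : SimpleGraph ((i : Fin m) × Fin (l i)) :=
  SimpleGraph.fromRel (fun p q =>
    (p.1 = q.1 ∧ p.2.val + 1 = q.2.val) ∨ (p.1 ≠ q.1 ∧ p.2.val = 0 ∧ q.2.val = 0))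

/-- The graph obtained from `H`, `C_{m1}` and `C_{m2}` by identifying the vertex `w` of `H`,
a vertex of `C_{m1}` and a vertex of `C_{m2}` into one vertex. -/
def glueTwoCycles {V : Type*} (H : SimpleGraph V) (w : V) (m1 m2 : ℕ) :
    SimpleGraph (V ⊕ (Fin (m1 - 1) ⊕ Fin (m2 - 1))) :=
  SimpleGraph.fromRel (fun p q =>
    match p, q with
    | .inl x, .inl y => H.Adj x y
    | .inl x, .inr (.inl i) => x = w ∧ (i.val = 0 ∨ i.val + 2 = m1)
    | .inl x, .inr (.inr i) => x = w ∧ (i.val = 0 ∨ i.val + 2 = m2)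
    | .inr (.inl i), .inr (.inl j) => i.val + 1 = j.val
    | .inr (.inr i), .inr (.inr j) => i.val + 1 = j.val
    | _, _ => False)

/-- The graph obtained from `H` and the cycle `C_M` by identifying the vertex `w` of `H`
with one vertex of the cycle. -/
def glueOneCycle {V : Type*} (H : SimpleGraph V) (w : V) (M : ℕ) :
    SimpleGraph (V ⊕ Fin (M - 1)) :=
  SimpleGraph.fromRel (fun p q =>
    match p, q with
    | .inl x, .inl y => H.Adj x y
    | .inl x, .inr i => x = w ∧ (i.val = 0 ∨ i.val + 2 = M)
    | .inr i, .inr j => i.val + 1 = j.val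
    | _, _ => False)

/-!
Write `e₁ = ecc H₁ u`, `e₂ = ecc H₂ v` and `D = d - 1`. In `G = glueMid` every vertex is joined
to the glued vertex by a copy of a shortest path of `H₁`, `H₂` or `P_d`, which bounds each
eccentricity of `G` from above in terms of the distance to `u` (resp. `v`), `e₁`, `e₂` and `D`.
In `G' = glueEnds` the vertices lie on an axis `H₁ — P_d — H₂`; the signed position along this
axis is `1`-Lipschitz, and together with the retractions of `G'` onto `H₁` and `H₂` it bounds
each eccentricity of `G'` from below. Comparing the two bounds vertex by vertex: if `e₂ ≤ e₁`,
no vertex loses and every vertex of `H₂ - v` gains; otherwise the path vertices lose at most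
`min D e₂` in total, while each of the at least two vertices of `H₁` gains `min e₂ D`.
-/

namespace SimpleGraph

variable {V W : Type*} {G : SimpleGraph V} {H : SimpleGraph W}

lemma Adj.dist_le_dist_add_one {a b : V} (h : G.Adj a b) (c : V) :
    G.dist c a ≤ G.dist c b + 1 := by
  rcases h.symm.diff_dist_adj (u := c) with h | h | h <;> omega

lemma Walk.sub_le_length {φ : V → ℤ} (hφ : ∀ a b, G.Adj a b → φ a ≤ φ b + 1) {s t : V}
    (p : G.Walk s t) : φ s - φ t ≤ p.length := by
  induction p with
  | nil => simp
  | cons hadj _ ih =>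
    have := hφ _ _ hadj
    rw [Walk.length_cons]
    push_cast
    omega

lemma Reachable.sub_le_dist {φ : V → ℤ} (hφ : ∀ a b, G.Adj a b → φ a ≤ φ b + 1) {s t : V}
    (h : G.Reachable s t) : φ s - φ t ≤ G.dist s t := by
  obtain ⟨p, hp⟩ := h.exists_walk_length_eq_dist
  exact hp ▸ p.sub_le_length hφ

lemma Reachable.dist_le_of_weakHom {r : V → W}
    (hr : ∀ a b, G.Adj a b → r a = r b ∨ H.Adj (r a) (r b)) {s t : V} (h : G.Reachable s t) :
    H.dist (r s) (r t) ≤ G.dist s t := by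
  have hφ : ∀ a b, G.Adj a b → (H.dist (r t) (r a) : ℤ) ≤ H.dist (r t) (r b) + 1 := by
    intro a b hab
    rcases hr a b hab with heq | hadj
    · simp [heq]
    · exact_mod_cast hadj.dist_le_dist_add_one (r t)
  simpa [dist_comm] using h.sub_le_dist hφ

lemma Hom.dist_map_le (f : H →g G) {a b : W} (h : H.Reachable a b) :
    G.dist (f a) (f b) ≤ H.dist a b := by
  obtain ⟨p, hp⟩ := h.exists_walk_length_eq_dist
  simpa [hp] using dist_le (p.map f)

lemma pathGraph_dist_le {n : ℕ} {i j : Fin n} (hij : i ≤ j) :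
    (pathGraph n).dist i j ≤ (j : ℕ) - i := by
  obtain ⟨j, hj⟩ := j
  induction j with
  | zero => simp [show i = ⟨0, hj⟩ from Fin.ext (Nat.le_zero.mp hij)]
  | succ k ih =>
    rcases hij.eq_or_lt with rfl | hik
    · simp
    · have hik : (i : ℕ) ≤ k := Nat.lt_succ_iff.mp hik
      have hadj : (pathGraph n).Adj ⟨k, by omega⟩ ⟨k + 1, hj⟩ := by simp [pathGraph_adj]
      have htri := (pathGraph_preconnected n i ⟨k, by omega⟩).dist_triangle_left ⟨k + 1, hj⟩
      rw [dist_eq_one_iff_adj.mpr hadj] at htri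
      have := ih (by omega) hik
      dsimp only at this ⊢
      omega

end SimpleGraph

section Eccentricity

variable {V W : Type*} {G : SimpleGraph V} {H : SimpleGraph W}

lemma dist_le_ecc [Finite V] (G : SimpleGraph V) (a b : V) : G.dist a b ≤ ecc G a :=
  le_ciSup (Set.finite_range _).bddAbove b

lemma ecc_le {a : V} {n : ℕ} (h : ∀ b, G.dist a b ≤ n) : ecc G a ≤ n :=
  have : Nonempty V := ⟨a⟩
  ciSup_le h

lemma exists_dist_eq_ecc [Finite V] (G : SimpleGraph V) (a : V) : ∃ b, G.dist a b = ecc G a := by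
  have : Nonempty V := ⟨a⟩
  obtain ⟨b, hb⟩ := Finite.exists_max (G.dist a)
  exact ⟨b, le_antisymm (dist_le_ecc G a b) (ecc_le hb)⟩

lemma SimpleGraph.Connected.ecc_le_dist_add_ecc [Finite V] (hG : G.Connected) (a b : V) :
    ecc G b ≤ G.dist a b + ecc G a :=
  ecc_le fun c => by
    have := hG.dist_triangle (u := b) (v := a) (w := c)
    have := dist_le_ecc G a c
    have : G.dist b a = G.dist a b := SimpleGraph.dist_comm
    omega

lemma SimpleGraph.Connected.one_le_ecc [Finite V] [Nontrivial V] (hG : G.Connected) (a : V) :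
    1 ≤ ecc G a := by
  obtain ⟨b, hb⟩ := exists_ne a
  exact (hG.pos_dist_of_ne hb.symm).trans_le (dist_le_ecc G a b)

lemma ecc_pathGraph_le {n : ℕ} (k : Fin n) : ecc (pathGraph n) k ≤ max (k : ℕ) (n - 1 - k) :=
  ecc_le fun j => by
    rcases le_total k j with h | h
    · have := pathGraph_dist_le h
      omega
    · have := pathGraph_dist_le h
      rw [SimpleGraph.dist_comm] at this
      omega

lemma SimpleGraph.Hom.ecc_map_le [Finite W] (f : H →g G) (hH : H.Preconnected) (c : W) {R : ℕ}
    (hR : ∀ t, t ∈ Set.range f ∨ G.dist (f c) t ≤ R) (x : W) :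
    ecc G (f x) ≤ max (ecc H x) (H.dist c x + R) :=
  ecc_le fun t => by
    rcases hR t with ⟨y, rfl⟩ | ht
    · exact le_max_of_le_left ((f.dist_map_le (hH x y)).trans (dist_le_ecc H x y))
    · have htri := ((hH x c).map f).dist_triangle_left t
      have := f.dist_map_le (hH x c)
      have : H.dist x c = H.dist c x := SimpleGraph.dist_comm
      omega

lemma SimpleGraph.Hom.ecc_le_ecc_map [Finite V] [Finite W] (f : H →g G) (r : V → W)
    (hrf : ∀ x, r (f x) = x) (hr : ∀ a b, G.Adj a b → r a = r b ∨ H.Adj (r a) (r b))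
    (hH : H.Preconnected) (x : W) : ecc H x ≤ ecc G (f x) := by
  obtain ⟨z, hz⟩ := exists_dist_eq_ecc H x
  calc ecc H x = H.dist (r (f x)) (r (f z)) := by rw [hrf, hrf, hz]
    _ ≤ G.dist (f x) (f z) := ((hH x z).map f).dist_le_of_weakHom hr
    _ ≤ ecc G (f x) := dist_le_ecc G _ _

end Eccentricity

section Arithmetic

open Finset

lemma Fin.sum_max_eq_sum_max_add_min (D e : ℕ) :
    ∑ i : Fin D, max ((i : ℕ) + 1 + e) (D - 1 - i) =
      ∑ i : Fin D, max ((i : ℕ) + 1) (D - 1 - i + e) + min D e := by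
  rw [Fin.sum_univ_eq_sum_range (fun i => max (i + 1 + e) (D - 1 - i)),
    Fin.sum_univ_eq_sum_range (fun i => max (i + 1) (D - 1 - i + e)),
    ← sum_range_reflect (fun i => max (i + 1) (D - 1 - i + e))]
  -- `2 * max a b = a + b + |a - b|`, and the differences of the `|a - b|` telescope
  have htele := sum_range_sub (fun i : ℕ => |(2 * i + e : ℤ) - D|) D
  have hterm : ∀ i ∈ range D, ((2 * max (i + 1 + e) (D - 1 - i) : ℕ) : ℤ) =
      (2 * max (D - 1 - i + 1) (D - 1 - (D - 1 - i) + e) : ℕ) +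
        (|(2 * (i + 1 : ℕ) + e : ℤ) - D| - |(2 * i + e : ℤ) - D|) := by
    intro i hi
    have hi := mem_range.mp hi
    rcases le_total (2 * i + e : ℤ) D with h | h <;>
    rcases le_total (2 * (i + 1 : ℕ) + e : ℤ) D with h' | h' <;>
    simp only [abs_of_nonneg, abs_of_nonpos, sub_nonneg, sub_nonpos, h, h'] <;> push_cast at * <;>
    omega
  have hsum := sum_congr rfl hterm
  rw [sum_add_distrib, htele] at hsum
  push_cast at hsum
  rw [← mul_sum, ← mul_sum] at hsum
  have hends : |(2 * D + e - D : ℤ)| - |(0 + e - D : ℤ)| = 2 * min (D : ℤ) e := by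
    rcases le_total (e : ℤ) D with h | h
    · rw [abs_of_nonneg (by omega), abs_of_nonpos (by omega)]
      omega
    · rw [abs_of_nonneg (by omega), abs_of_nonneg (by omega)]
      omega
  zify
  omega

lemma sum_max_lt_sum_max {α β : Type*} [Fintype α] [Fintype β] [Nonempty β] {D e₁ e₂ : ℕ}
    (hD : 1 ≤ D) (he₁ : 1 ≤ e₁) (hα : 2 ≤ Fintype.card α) (ε₁ δ₁ : α → ℕ) (ε₂ δ₂ : β → ℕ)
    (hε₁ : ∀ x, ε₁ x ≤ δ₁ x + e₁) (hε₂ : ∀ y, ε₂ y ≤ δ₂ y + e₂) :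
    ∑ x, max (ε₁ x) (δ₁ x + max e₂ D) + ∑ y, max (ε₂ y) (δ₂ y + max e₁ D) +
        ∑ i : Fin D, max ((i : ℕ) + 1 + max e₁ e₂) (D - 1 - i) <
      ∑ x, max (ε₁ x) (δ₁ x + D + e₂) + ∑ y, max (ε₂ y) (δ₂ y + D + e₁) +
        ∑ i : Fin D, max ((i : ℕ) + 1 + e₁) (D - 1 - i + e₂) := by
  rcases le_total e₂ e₁ with h | h
  · have h₁ : ∑ x, max (ε₁ x) (δ₁ x + max e₂ D) ≤ ∑ x, max (ε₁ x) (δ₁ x + D + e₂) :=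
      sum_le_sum fun x _ => by omega
    have h₂ : ∑ y, max (ε₂ y) (δ₂ y + max e₁ D) < ∑ y, max (ε₂ y) (δ₂ y + D + e₁) :=
      sum_lt_sum_of_nonempty univ_nonempty fun y _ => by have := hε₂ y; omega
    have h₃ : ∑ i : Fin D, max ((i : ℕ) + 1 + max e₁ e₂) (D - 1 - i) ≤
        ∑ i : Fin D, max ((i : ℕ) + 1 + e₁) (D - 1 - i + e₂) :=
      sum_le_sum fun i _ => by omega
    omega
  · have h₁ : ∑ x, max (ε₁ x) (δ₁ x + max e₂ D) + Fintype.card α * min e₂ D ≤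
        ∑ x, max (ε₁ x) (δ₁ x + D + e₂) := by
      simpa [sum_add_distrib] using
        sum_le_sum fun x (_ : x ∈ univ) => show max (ε₁ x) (δ₁ x + max e₂ D) + min e₂ D ≤ _ by
          have := hε₁ x
          omega
    have h₂ : ∑ y, max (ε₂ y) (δ₂ y + max e₁ D) ≤ ∑ y, max (ε₂ y) (δ₂ y + D + e₁) :=
      sum_le_sum fun y _ => by omega
    have h₃ : ∑ i : Fin D, max ((i : ℕ) + 1 + max e₁ e₂) (D - 1 - i) ≤
        ∑ i : Fin D, max ((i : ℕ) + 1 + e₁) (D - 1 - i + e₂) + min D e₂ := by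
      rw [max_eq_right h, Fin.sum_max_eq_sum_max_add_min]
      gcongr with i
      omega
    have : 2 * min e₂ D ≤ Fintype.card α * min e₂ D := Nat.mul_le_mul_right _ hα
    omega

end Arithmetic

section Gluing

variable {V₁ V₂ : Type*} {H₁ : SimpleGraph V₁} {H₂ : SimpleGraph V₂} {u : V₁} {v : V₂} {d : ℕ}

/-- The vertex `v_{k+1}` of the path, `v_1` being the copy of `u`. -/
def pathVertex (u : V₁) (v : V₂) (d : ℕ) (k : Fin d) : V₁ ⊕ ({x : V₂ // x ≠ v} ⊕ Fin (d - 1)) :=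
  if h : (k : ℕ) = 0 then .inl u else .inr (.inr ⟨k - 1, by omega⟩)

@[simp]
lemma pathVertex_zero (hd : 0 < d) : pathVertex u v d ⟨0, hd⟩ = .inl u := rfl

@[simp]
lemma pathVertex_succ (i : ℕ) (hi : i + 1 < d) :
    pathVertex u v d ⟨i + 1, hi⟩ = .inr (.inr ⟨i, by omega⟩) := by
  simp [pathVertex]

def liftRight [DecidableEq V₂] {α : Type*} (c : α ⊕ ({x : V₂ // x ≠ v} ⊕ Fin (d - 1))) (y : V₂) :
    α ⊕ ({x : V₂ // x ≠ v} ⊕ Fin (d - 1)) :=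
  if h : y = v then c else .inr (.inl ⟨y, h⟩)

@[simp]
lemma liftRight_self [DecidableEq V₂] {α : Type*} (c : α ⊕ ({x : V₂ // x ≠ v} ⊕ Fin (d - 1))) :
    liftRight c v = c := by
  simp [liftRight]

@[simp]
lemma liftRight_val [DecidableEq V₂] {α : Type*} (c : α ⊕ ({x : V₂ // x ≠ v} ⊕ Fin (d - 1)))
    (y : {x : V₂ // x ≠ v}) : liftRight c y = .inr (.inl y) := by
  simp [liftRight, y.2]

namespace glueMid

variable (H₁ H₂ u v d) in
def left : H₁ →g glueMid H₁ H₂ u v d where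
  toFun := .inl
  map_rel' h := by simp [glueMid, h, h.ne]

variable (H₁ H₂ u v d) in
def right [DecidableEq V₂] : H₂ →g glueMid H₁ H₂ u v d where
  toFun := liftRight (.inl u)
  map_rel' {a b} h := by
    unfold liftRight
    split_ifs <;> subst_vars <;> simp_all [glueMid, h.symm, h.ne]

variable (H₁ H₂ u v d) in
def path : pathGraph d →g glueMid H₁ H₂ u v d where
  toFun := pathVertex u v d
  map_rel' {a b} h := by
    rw [pathGraph_adj] at h
    unfold pathVertex
    split_ifs <;>
      simp only [glueMid, fromRel_adj, ne_eq, SimpleGraph.irrefl, reduceCtorEq, Sum.inr.injEq, Fin.ext_iff,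
        not_false_eq_true, true_and, false_or, or_false] <;> omega

@[simp] lemma left_apply (x : V₁) : left H₁ H₂ u v d x = .inl x := rfl

@[simp] lemma right_apply [DecidableEq V₂] (y : V₂) :
    right H₁ H₂ u v d y = liftRight (.inl u) y := rfl

@[simp] lemma path_apply (k : Fin d) : path H₁ H₂ u v d k = pathVertex u v d k := rfl

variable (H₁ H₂) in
lemma dist_inl_le (hH₁ : H₁.Connected) (x : V₁) :
    (glueMid H₁ H₂ u v d).dist (.inl u) (.inl x) ≤ H₁.dist u x :=
  (left H₁ H₂ u v d).dist_map_le (hH₁ u x)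

variable (H₁ H₂) in
lemma dist_inr_inl_le (hH₂ : H₂.Connected) (y : {x : V₂ // x ≠ v}) :
    (glueMid H₁ H₂ u v d).dist (.inl u) (.inr (.inl y)) ≤ H₂.dist v y := by
  classical
  simpa using (right H₁ H₂ u v d).dist_map_le (hH₂ v y)

variable (H₁ H₂) in
lemma dist_inr_inr_le (i : Fin (d - 1)) :
    (glueMid H₁ H₂ u v d).dist (.inl u) (.inr (.inr i)) ≤ i + 1 := by
  have := i.isLt
  have hle := pathGraph_dist_le (Fin.mk_le_mk.mpr (Nat.zero_le (i + 1)) :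
    (⟨0, by omega⟩ : Fin d) ≤ ⟨i + 1, by omega⟩)
  have := (path H₁ H₂ u v d).dist_map_le
    (pathGraph_preconnected d ⟨0, by omega⟩ ⟨i + 1, by omega⟩)
  simp only [path_apply, pathVertex_zero, pathVertex_succ] at this
  exact this.trans hle

variable [Finite V₁] [Finite V₂]

lemma ecc_inl_le (hH₁ : H₁.Connected) (hH₂ : H₂.Connected) (x : V₁) :
    ecc (glueMid H₁ H₂ u v d) (.inl x) ≤ max (ecc H₁ x) (H₁.dist u x + max (ecc H₂ v) (d - 1)) := by
  refine (left H₁ H₂ u v d).ecc_map_le hH₁.preconnected u (fun t => ?_) x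
  simp only [left_apply]
  rcases t with x' | y | i
  · exact .inl ⟨x', rfl⟩
  · have := dist_inr_inl_le H₁ H₂ (u := u) (d := d) hH₂ y
    have := dist_le_ecc H₂ v y
    omega
  · have := dist_inr_inr_le H₁ H₂ (u := u) (v := v) i
    omega

lemma ecc_inr_inl_le (hH₁ : H₁.Connected) (hH₂ : H₂.Connected) (y : {x : V₂ // x ≠ v}) :
    ecc (glueMid H₁ H₂ u v d) (.inr (.inl y)) ≤
      max (ecc H₂ y) (H₂.dist v y + max (ecc H₁ u) (d - 1)) := by
  classical
  have := (right H₁ H₂ u v d).ecc_map_le hH₂.preconnected v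
    (R := max (ecc H₁ u) (d - 1)) (fun t => ?_) y
  · simpa using this
  simp only [right_apply, liftRight_self]
  rcases t with x | y' | i
  · have := dist_inl_le H₁ H₂ (u := u) (v := v) (d := d) hH₁ x
    have := dist_le_ecc H₁ u x
    omega
  · exact .inl ⟨y', by simp⟩
  · have := dist_inr_inr_le H₁ H₂ (u := u) (v := v) i
    omega

lemma ecc_inr_inr_le (hH₁ : H₁.Connected) (hH₂ : H₂.Connected) (i : Fin (d - 1)) :
    ecc (glueMid H₁ H₂ u v d) (.inr (.inr i)) ≤
      max (i + 1 + max (ecc H₁ u) (ecc H₂ v)) (d - 1 - 1 - i) := by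
  have := i.isLt
  have hecc := (path H₁ H₂ u v d).ecc_map_le (pathGraph_preconnected d)
    ⟨0, by omega⟩ (R := max (ecc H₁ u) (ecc H₂ v)) (fun t => ?_) ⟨i + 1, by omega⟩
  · have hk : (i : ℕ) + 1 < d := by omega
    have : ecc (pathGraph d) ⟨i + 1, hk⟩ ≤ max ((i : ℕ) + 1) (d - 1 - (i + 1)) :=
      ecc_pathGraph_le _
    have : (pathGraph d).dist ⟨0, by omega⟩ ⟨i + 1, hk⟩ ≤ (i : ℕ) + 1 - 0 :=
      pathGraph_dist_le (Fin.mk_le_mk.mpr (Nat.zero_le _))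
    simp only [path_apply, pathVertex_succ, Fin.eta] at hecc
    omega
  simp only [path_apply, pathVertex_zero]
  rcases t with x | y | j
  · have := dist_inl_le H₁ H₂ (u := u) (v := v) (d := d) hH₁ x
    have := dist_le_ecc H₁ u x
    omega
  · have := dist_inr_inl_le H₁ H₂ (u := u) (d := d) hH₂ y
    have := dist_le_ecc H₂ v y
    omega
  · exact .inl ⟨⟨j + 1, by omega⟩, by simp⟩

end glueMid

namespace glueEnds

variable (H₁ H₂ u v d) in
def left : H₁ →g glueEnds H₁ H₂ u v d where
  toFun := .inl
  map_rel' h := by simp [glueEnds, h, h.ne]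

variable (H₁ H₂ u v) in
def right [DecidableEq V₂] (hd : 2 ≤ d) : H₂ →g glueEnds H₁ H₂ u v d where
  toFun := liftRight (.inr (.inr ⟨d - 2, by omega⟩))
  map_rel' {a b} h := by
    unfold liftRight
    split_ifs <;> subst_vars <;>
      simp_all only [glueEnds, fromRel_adj, ne_eq, SimpleGraph.irrefl, reduceCtorEq, Sum.inr.injEq, Sum.inl.injEq,
        Subtype.mk.injEq, h.ne, h.symm, not_false_eq_true, true_and, and_true, and_self, or_self,
        false_or, or_false] <;> omega

variable (H₁ H₂ u v d) in
def path : pathGraph d →g glueEnds H₁ H₂ u v d where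
  toFun := pathVertex u v d
  map_rel' {a b} h := by
    rw [pathGraph_adj] at h
    unfold pathVertex
    split_ifs <;>
      simp only [glueEnds, fromRel_adj, ne_eq, SimpleGraph.irrefl, reduceCtorEq, Sum.inr.injEq, Fin.ext_iff,
        not_false_eq_true, true_and, false_or, or_false] <;> omega

@[simp] lemma right_apply [DecidableEq V₂] (hd : 2 ≤ d) (y : V₂) :
    right H₁ H₂ u v hd y = liftRight (.inr (.inr ⟨d - 2, by omega⟩)) y := rfl

@[simp] lemma path_apply (k : Fin d) : path H₁ H₂ u v d k = pathVertex u v d k := rfl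

lemma connected (hH₁ : H₁.Connected) (hH₂ : H₂.Connected) (hd : 2 ≤ d) :
    (glueEnds H₁ H₂ u v d).Connected := by
  classical
  have hpath : ∀ k : Fin d, (glueEnds H₁ H₂ u v d).Reachable (.inl u) (pathVertex u v d k) := by
    intro k
    have := (pathGraph_preconnected d ⟨0, by omega⟩ k).map (path H₁ H₂ u v d)
    rwa [path_apply, path_apply, pathVertex_zero] at this
  rw [connected_iff_exists_forall_reachable]
  refine ⟨.inl u, ?_⟩
  rintro (x | y | i)
  · exact (hH₁ u x).map (left H₁ H₂ u v d)
  · have hv := hpath ⟨d - 2 + 1, by omega⟩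
    rw [pathVertex_succ] at hv
    have hy := (hH₂ v y).map (right H₁ H₂ u v hd)
    simp only [right_apply, liftRight_self, liftRight_val] at hy
    exact hv.trans hy
  · have := hpath ⟨i + 1, by omega⟩
    rwa [pathVertex_succ, Fin.eta] at this

def retractLeft (u : V₁) : V₁ ⊕ ({x : V₂ // x ≠ v} ⊕ Fin (d - 1)) → V₁ :=
  Sum.elim id fun _ => u

def retractRight (v : V₂) : V₁ ⊕ ({x : V₂ // x ≠ v} ⊕ Fin (d - 1)) → V₂ :=
  Sum.elim (fun _ => v) (Sum.elim Subtype.val fun _ => v)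

/-- The signed position along the axis `H₁ — P_d — H₂`, with `u` at height `0`. -/
noncomputable def height (H₁ : SimpleGraph V₁) (H₂ : SimpleGraph V₂) (u : V₁) (v : V₂) (d : ℕ) :
    V₁ ⊕ ({x : V₂ // x ≠ v} ⊕ Fin (d - 1)) → ℤ :=
  Sum.elim (fun x => -H₁.dist u x) (Sum.elim (fun y => (d - 1 : ℕ) + H₂.dist v y) fun i => i + 1)

@[simp] lemma height_inl (x : V₁) : height H₁ H₂ u v d (.inl x) = -H₁.dist u x := rfl

@[simp] lemma height_inr_inl (y : {x : V₂ // x ≠ v}) :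
    height H₁ H₂ u v d (.inr (.inl y)) = (d - 1 : ℕ) + H₂.dist v y := rfl

@[simp] lemma height_inr_inr (i : Fin (d - 1)) :
    height H₁ H₂ u v d (.inr (.inr i)) = i + 1 := rfl

lemma height_right [DecidableEq V₂] (hd : 2 ≤ d) (y : V₂) :
    height H₁ H₂ u v d (right H₁ H₂ u v hd y) = (d - 1 : ℕ) + H₂.dist v y := by
  by_cases hy : y = v
  · subst hy
    simp only [right_apply, liftRight_self, height_inr_inr, SimpleGraph.dist_self]
    omega
  · simp [liftRight, hy]

lemma retractLeft_adj {a b : V₁ ⊕ ({x : V₂ // x ≠ v} ⊕ Fin (d - 1))}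
    (h : (glueEnds H₁ H₂ u v d).Adj a b) :
    retractLeft u a = retractLeft u b ∨ H₁.Adj (retractLeft u a) (retractLeft u b) := by
  rcases a with x | y | i <;> rcases b with x' | y' | i' <;>
    simp_all [glueEnds, retractLeft, adj_comm]

lemma retractRight_adj {a b : V₁ ⊕ ({x : V₂ // x ≠ v} ⊕ Fin (d - 1))}
    (h : (glueEnds H₁ H₂ u v d).Adj a b) :
    retractRight v a = retractRight v b ∨ H₂.Adj (retractRight v a) (retractRight v b) := by
  rcases a with x | y | i <;> rcases b with x' | y' | i' <;>
    simp_all [glueEnds, retractRight, adj_comm]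

lemma height_le_of_adj {a b : V₁ ⊕ ({x : V₂ // x ≠ v} ⊕ Fin (d - 1))}
    (h : (glueEnds H₁ H₂ u v d).Adj a b) : height H₁ H₂ u v d a ≤ height H₁ H₂ u v d b + 1 := by
  rcases a with x | y | i <;> rcases b with x' | y' | i' <;>
    simp only [glueEnds, fromRel_adj, ne_eq, reduceCtorEq, Sum.inl.injEq, Sum.inr.injEq, adj_comm,
      or_self, or_false, false_or, and_false, true_and, not_false_eq_true, height, Sum.elim_inl,
      Sum.elim_inr] at h ⊢
  · have := h.2.symm.dist_le_dist_add_one u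
    omega
  · omega
  · have := h.2.dist_le_dist_add_one v
    omega
  · rw [dist_eq_one_iff_adj.mpr h.2]
    omega
  · simp only [h.1, SimpleGraph.dist_self]
    omega
  · omega
  · omega

variable [Finite V₁] [Finite V₂]

lemma abs_height_sub_le_ecc (hH₁ : H₁.Connected) (hH₂ : H₂.Connected) (hd : 2 ≤ d)
    (s t : V₁ ⊕ ({x : V₂ // x ≠ v} ⊕ Fin (d - 1))) :
    |height H₁ H₂ u v d t - height H₁ H₂ u v d s| ≤ ecc (glueEnds H₁ H₂ u v d) s := by
  have hts := (connected hH₁ hH₂ hd t s).sub_le_dist fun _ _ => height_le_of_adj (u := u)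
  have hst := (connected hH₁ hH₂ hd s t).sub_le_dist fun _ _ => height_le_of_adj (u := u)
  have := dist_le_ecc (glueEnds H₁ H₂ u v d) s t
  rw [SimpleGraph.dist_comm] at hts
  exact abs_sub_le_iff.mpr ⟨by omega, by omega⟩

lemma le_ecc_inl (hH₁ : H₁.Connected) (hH₂ : H₂.Connected) (hd : 2 ≤ d) (x : V₁) :
    max (ecc H₁ x) (H₁.dist u x + (d - 1) + ecc H₂ v) ≤ ecc (glueEnds H₁ H₂ u v d) (.inl x) := by
  classical
  refine max_le ((left H₁ H₂ u v d).ecc_le_ecc_map (retractLeft u)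
    (fun _ => rfl) (fun _ _ => retractLeft_adj) hH₁.preconnected x) ?_
  obtain ⟨y, hy⟩ := exists_dist_eq_ecc H₂ v
  have := abs_height_sub_le_ecc (u := u) hH₁ hH₂ hd (.inl x) (right H₁ H₂ u v hd y)
  rw [height_right, height_inl, abs_le] at this
  omega

lemma le_ecc_inr_inl (hH₁ : H₁.Connected) (hH₂ : H₂.Connected) (hd : 2 ≤ d)
    (y : {x : V₂ // x ≠ v}) :
    max (ecc H₂ y) (H₂.dist v y + (d - 1) + ecc H₁ u) ≤
      ecc (glueEnds H₁ H₂ u v d) (.inr (.inl y)) := by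
  classical
  have hretract : ∀ y, retractRight v (right H₁ H₂ u v hd y) = y := by
    intro y
    by_cases hy : y = v <;> simp [retractRight, liftRight, hy]
  have := (right H₁ H₂ u v hd).ecc_le_ecc_map (retractRight v) hretract
    (fun _ _ => retractRight_adj) hH₂.preconnected y
  refine max_le (by simpa using this) ?_
  obtain ⟨x, hx⟩ := exists_dist_eq_ecc H₁ u
  have := abs_height_sub_le_ecc (u := u) hH₁ hH₂ hd (.inr (.inl y)) (.inl x)
  rw [height_inl, height_inr_inl, abs_le] at this
  omega

lemma le_ecc_inr_inr (hH₁ : H₁.Connected) (hH₂ : H₂.Connected) (hd : 2 ≤ d) (i : Fin (d - 1)) :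
    max (i + 1 + ecc H₁ u) (d - 1 - 1 - i + ecc H₂ v) ≤
      ecc (glueEnds H₁ H₂ u v d) (.inr (.inr i)) := by
  classical
  obtain ⟨x, hx⟩ := exists_dist_eq_ecc H₁ u
  obtain ⟨y, hy⟩ := exists_dist_eq_ecc H₂ v
  have hx' := abs_height_sub_le_ecc (u := u) (v := v) hH₁ hH₂ hd (.inr (.inr i)) (.inl x)
  have hy' := abs_height_sub_le_ecc (u := u) hH₁ hH₂ hd (.inr (.inr i)) (right H₁ H₂ u v hd y)
  rw [height_inl, height_inr_inr, abs_le] at hx'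
  rw [height_right, height_inr_inr, abs_le] at hy'
  have := i.isLt
  omega

end glueEnds

end Gluing

theorem stmt2 {V1 V2 : Type*} [Fintype V1] [Fintype V2] [DecidableEq V2]
    (H1 : SimpleGraph V1) (H2 : SimpleGraph V2)
    (hH1 : H1.Connected) (hH2 : H2.Connected)
    (hV1 : 2 ≤ Fintype.card V1) (hV2 : 2 ≤ Fintype.card V2)
    (u : V1) (v : V2) (d : ℕ) (hd : 2 ≤ d) :
    totalEcc (glueMid H1 H2 u v d) < totalEcc (glueEnds H1 H2 u v d) := by
  have : Nontrivial V1 := Fintype.one_lt_card_iff_nontrivial.mp hV1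
  have : Nontrivial V2 := Fintype.one_lt_card_iff_nontrivial.mp hV2
  have : Nonempty {x : V2 // x ≠ v} := nonempty_subtype.mpr (exists_ne v)
  simp only [totalEcc, Fintype.sum_sum_type]
  calc _ ≤ ∑ x, max (ecc H1 x) (H1.dist u x + max (ecc H2 v) (d - 1)) +
        (∑ y : {x : V2 // x ≠ v}, max (ecc H2 y) (H2.dist v y + max (ecc H1 u) (d - 1)) +
          ∑ i : Fin (d - 1), max (i + 1 + max (ecc H1 u) (ecc H2 v)) (d - 1 - 1 - i)) := by
        gcongr with x _ y _ i
        · exact glueMid.ecc_inl_le hH1 hH2 x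
        · exact glueMid.ecc_inr_inl_le hH1 hH2 y
        · exact glueMid.ecc_inr_inr_le hH1 hH2 i
    _ < ∑ x, max (ecc H1 x) (H1.dist u x + (d - 1) + ecc H2 v) +
        (∑ y : {x : V2 // x ≠ v}, max (ecc H2 y) (H2.dist v y + (d - 1) + ecc H1 u) +
          ∑ i : Fin (d - 1), max (i + 1 + ecc H1 u) (d - 1 - 1 - i + ecc H2 v)) := by
        rw [← add_assoc, ← add_assoc]
        exact sum_max_lt_sum_max (by omega) (hH1.one_le_ecc u) hV1 _ _ _ _
          (hH1.ecc_le_dist_add_ecc u) (fun y => hH2.ecc_le_dist_add_ecc v y)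
    _ ≤ _ := by
        gcongr with x _ y _ i
        · exact glueEnds.le_ecc_inl hH1 hH2 hd x
        · exact glueEnds.le_ecc_inr_inl hH1 hH2 hd y
        · exact glueEnds.le_ecc_inr_inr hH1 hH2 hd i
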